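/- Let g₁, g₂ : E → ℝ be bounded functions with second moduli satisfying sup_t η(gᵢ;t)/t^α ≤ Zᵢ and first moduli satisfying sup_t ω(gᵢ;t)/t^{α/2} ≤ Hᵢ, for some α ∈ (0,1]. Then the pointwise product Ψ(x) = g₁(x)·g₂(x) satisfies, for all t > 0, η(Ψ;t) ≤ C·t^α where C depends only on ‖g₁‖_∞, ‖g₂‖_∞, Z₁, Z₂, H₁, H₂. Explicitly one may take η(Ψ;t) ≤ (Z₁‖g₂‖_∞ + ‖g₁‖_∞ Z₂ + 3 H₁ H₂)·t^α. -/

import Mathlib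

/-!
The second difference obeys a discrete Leibniz rule,
Δ²ₕ(fg)(x) = Δ²ₕf(x)·g(x+2h) + f(x)·Δ²ₕg(x) + 2·Δₕf(x)·Δₕg(x+h),
so η(fg;t) ≤ η(f;t)‖g‖∞ + ‖f‖∞η(g;t) + 2ω(f;t)ω(g;t). The two first-order moduli contribute
t^{α/2}·t^{α/2} = t^α, and the constant 3 in place of 2 only costs H₁H₂t^α ≥ ω(f;t)ω(g;t) ≥ 0.
-/
open Set

noncomputable def omegaMod {E F : Type*} [NormedAddCommGroup E] [NormedAddCommGroup F]
    (f : E → F) (t : ℝ) : ℝ :=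
  sSup {r : ℝ | ∃ x h : E, ‖h‖ ≤ t ∧ r = ‖f (x + h) - f x‖}

noncomputable def etaMod {E F : Type*} [NormedAddCommGroup E] [NormedSpace ℝ E]
    [NormedAddCommGroup F] [NormedSpace ℝ F] (f : E → F) (t : ℝ) : ℝ :=
  sSup {r : ℝ | ∃ x h : E, ‖h‖ ≤ t ∧ r = ‖f (x + 2 • h) - 2 • f (x + h) + f x‖}

section Moduli

variable {E F : Type*} [NormedAddCommGroup E] [NormedAddCommGroup F] {f : E → F} {M t : ℝ}

-- Boundedness of `f` keeps the `sSup` in the moduli away from its junk value `0`.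
theorem norm_sub_le_omegaMod (hf : ∀ x, ‖f x‖ ≤ M) {x h : E} (hh : ‖h‖ ≤ t) :
    ‖f (x + h) - f x‖ ≤ omegaMod f t := by
  refine le_csSup ⟨M + M, ?_⟩ ⟨x, h, hh, rfl⟩
  rintro _ ⟨y, k, -, rfl⟩
  exact (norm_sub_le _ _).trans (add_le_add (hf _) (hf _))

theorem omegaMod_nonneg (hf : ∀ x, ‖f x‖ ≤ M) (ht : 0 ≤ t) : 0 ≤ omegaMod f t := by
  simpa using norm_sub_le_omegaMod hf (x := 0) (h := 0) (norm_zero.trans_le ht)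

theorem norm_secondDiff_le_etaMod [NormedSpace ℝ E] [NormedSpace ℝ F]
    (hf : ∀ x, ‖f x‖ ≤ M) {x h : E} (hh : ‖h‖ ≤ t) :
    ‖f (x + 2 • h) - 2 • f (x + h) + f x‖ ≤ etaMod f t := by
  refine le_csSup ⟨M + 2 * M + M, ?_⟩ ⟨x, h, hh, rfl⟩
  rintro _ ⟨y, k, -, rfl⟩
  calc ‖f (y + 2 • k) - 2 • f (y + k) + f y‖
      ≤ ‖f (y + 2 • k)‖ + ‖2 • f (y + k)‖ + ‖f y‖ :=
        (norm_add_le _ _).trans (by gcongr; exact norm_sub_le _ _)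
    _ ≤ M + 2 * M + M := by
      gcongr
      · exact hf _
      · exact norm_nsmul_le.trans (by push_cast; gcongr; exact hf _)
      · exact hf _

end Moduli

theorem mul_sub_two_mul_add_mul {R : Type*} [CommRing R] (a₀ a₁ a₂ b₀ b₁ b₂ : R) :
    a₂ * b₂ - 2 * (a₁ * b₁) + a₀ * b₀
      = (a₂ - 2 * a₁ + a₀) * b₂ + a₀ * (b₂ - 2 * b₁ + b₀) + 2 * ((a₁ - a₀) * (b₂ - b₁)) := by
  ring

theorem etaMod_mul_le {E : Type*} [NormedAddCommGroup E] [NormedSpace ℝ E] {f g : E → ℝ}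
    {M₁ M₂ t : ℝ} (hf : ∀ x, |f x| ≤ M₁) (hg : ∀ x, |g x| ≤ M₂) (ht : 0 ≤ t) :
    etaMod (fun x => f x * g x) t
      ≤ etaMod f t * M₂ + M₁ * etaMod g t + 2 * (omegaMod f t * omegaMod g t) := by
  refine csSup_le ⟨_, 0, 0, norm_zero.trans_le ht, rfl⟩ ?_
  rintro _ ⟨x, h, hh, rfl⟩
  have hf₂ := norm_secondDiff_le_etaMod (f := f) hf hh (x := x)
  have hg₂ := norm_secondDiff_le_etaMod (f := g) hg hh (x := x)
  have hf₁ := norm_sub_le_omegaMod (f := f) hf hh (x := x)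
  have hg₁ := norm_sub_le_omegaMod (f := g) hg hh (x := x + h)
  rw [add_assoc, ← two_nsmul] at hg₁
  simp only [Real.norm_eq_abs, nsmul_eq_mul, Nat.cast_ofNat] at hf₂ hg₂ hf₁ hg₁ ⊢
  rw [mul_sub_two_mul_add_mul]
  calc _ ≤ |f (x + 2 • h) - 2 * f (x + h) + f x| * |g (x + 2 • h)|
        + |f x| * |g (x + 2 • h) - 2 * g (x + h) + g x|
        + 2 * (|f (x + h) - f x| * |g (x + 2 • h) - g (x + h)|) :=
        (abs_add_three _ _ _).trans_eq (by simp only [abs_mul, abs_two])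
    _ ≤ _ := by
      gcongr
      exacts [(abs_nonneg _).trans hf₂, hg _, (abs_nonneg _).trans (hf x), hf x,
        (abs_nonneg _).trans hf₁]

theorem stmt10_general {E : Type*} [NormedAddCommGroup E] [NormedSpace ℝ E]
    (g₁ g₂ : E → ℝ) (M₁ M₂ Z₁ Z₂ H₁ H₂ α : ℝ)
    (hM₁ : ∀ x, |g₁ x| ≤ M₁) (hM₂ : ∀ x, |g₂ x| ≤ M₂)
    (hZ₁ : ∀ t > (0 : ℝ), etaMod g₁ t ≤ Z₁ * t ^ α)
    (hZ₂ : ∀ t > (0 : ℝ), etaMod g₂ t ≤ Z₂ * t ^ α)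
    (hH₁ : ∀ t > (0 : ℝ), omegaMod g₁ t ≤ H₁ * t ^ (α / 2))
    (hH₂ : ∀ t > (0 : ℝ), omegaMod g₂ t ≤ H₂ * t ^ (α / 2)) :
    ∀ t > (0 : ℝ),
      etaMod (fun x => g₁ x * g₂ x) t ≤ (Z₁ * M₂ + M₁ * Z₂ + 3 * H₁ * H₂) * t ^ α := by
  intro t ht
  have hω₁ : 0 ≤ omegaMod g₁ t := omegaMod_nonneg (f := g₁) hM₁ ht.le
  have hω₂ : 0 ≤ omegaMod g₂ t := omegaMod_nonneg (f := g₂) hM₂ ht.le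
  have hωω : omegaMod g₁ t * omegaMod g₂ t ≤ H₁ * H₂ * t ^ α :=
    calc omegaMod g₁ t * omegaMod g₂ t ≤ H₁ * t ^ (α / 2) * (H₂ * t ^ (α / 2)) :=
          mul_le_mul (hH₁ t ht) (hH₂ t ht) hω₂ (hω₁.trans (hH₁ t ht))
      _ = H₁ * H₂ * t ^ α := by rw [mul_mul_mul_comm, ← Real.rpow_add ht, add_halves]
  calc etaMod (fun x => g₁ x * g₂ x) t
      ≤ etaMod g₁ t * M₂ + M₁ * etaMod g₂ t + 2 * (omegaMod g₁ t * omegaMod g₂ t) :=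
        etaMod_mul_le hM₁ hM₂ ht.le
    _ ≤ Z₁ * t ^ α * M₂ + M₁ * (Z₂ * t ^ α) + 2 * (H₁ * H₂ * t ^ α) := by
        gcongr
        exacts [(abs_nonneg _).trans (hM₂ 0), hZ₁ t ht, (abs_nonneg _).trans (hM₁ 0), hZ₂ t ht]
    _ ≤ (Z₁ * M₂ + M₁ * Z₂ + 3 * H₁ * H₂) * t ^ α := by
        linear_combination (mul_nonneg hω₁ hω₂).trans hωω

/-- Product estimate in Zygmund/Besov spaces (scalar case): if g₁, g₂ are bounded with
η(gᵢ;t) ≤ Zᵢ t^α and ω(gᵢ;t) ≤ Hᵢ t^{α/2}, then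
η(g₁·g₂;t) ≤ (Z₁‖g₂‖_∞ + ‖g₁‖_∞ Z₂ + 3 H₁ H₂) t^α. -/
theorem stmt10 {E : Type*} [NormedAddCommGroup E] [NormedSpace ℝ E]
    (g₁ g₂ : E → ℝ) (M₁ M₂ Z₁ Z₂ H₁ H₂ α : ℝ) (hα : α ∈ Set.Ioc (0 : ℝ) 1)
    (hM₁ : ∀ x, |g₁ x| ≤ M₁) (hM₂ : ∀ x, |g₂ x| ≤ M₂)
    (hZ₁ : ∀ t > (0 : ℝ), etaMod g₁ t ≤ Z₁ * t ^ α)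
    (hZ₂ : ∀ t > (0 : ℝ), etaMod g₂ t ≤ Z₂ * t ^ α)
    (hH₁ : ∀ t > (0 : ℝ), omegaMod g₁ t ≤ H₁ * t ^ (α / 2))
    (hH₂ : ∀ t > (0 : ℝ), omegaMod g₂ t ≤ H₂ * t ^ (α / 2)) :
    ∀ t > (0 : ℝ),
      etaMod (fun x => g₁ x * g₂ x) t ≤ (Z₁ * M₂ + M₁ * Z₂ + 3 * H₁ * H₂) * t ^ α :=
  stmt10_general g₁ g₂ M₁ M₂ Z₁ Z₂ H₁ H₂ α hM₁ hM₂ hZ₁ hZ₂ hH₁ hH₂
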